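/- arXiv:1910.03844 — 4 statements merged into one kernel-verified Lean document; each statement's English description precedes it below -/
import Mathlib

section
/- Let G be a finite symmetric directed graph (i.e., (u,v) is an edge whenever (v,u) is) in which every vertex has in-degree at least 1. Then for every edge e of G, the number of oriented spanning trees of the directed line graph L(G) rooted at the vertex e is at least the number of oriented spanning trees of G rooted at the tail of e. -/
/-- `T` (a finite set of ordered pairs) is a spanning arborescence of the digraph `E`
converging to the root `r`: its pairs are edges of `E`, every vertex other than `r`
has exactly one outgoing edge in `T`, the root has none, and every vertex has a
directed path in `T` to `r`. -/
def IsArborescence {V : Type*} [DecidableEq V] (E : V → V → Prop) (r : V)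
    (T : Finset (V × V)) : Prop :=
  (∀ p ∈ T, E p.1 p.2) ∧
  (∀ v : V, v ≠ r → (T.filter (fun p => p.1 = v)).card = 1) ∧
  ((T.filter (fun p => p.1 = r)).card = 0) ∧
  (∀ v : V, Relation.ReflTransGen (fun a b => (a, b) ∈ T) v r)

/-- `κ(G, r)`: the number of oriented spanning trees of the digraph `E` rooted at `r`. -/
noncomputable def kappa (V : Type*) [DecidableEq V] (E : V → V → Prop) (r : V) : ℕ :=
  Nat.card {T : Finset (V × V) // IsArborescence E r T}

def EdgeType {V : Type*} (E : V → V → Prop) : Type _ := {p : V × V // E p.1 p.2}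

instance {V : Type*} [DecidableEq V] (E : V → V → Prop) : DecidableEq (EdgeType E) :=
  fun a b => decidable_of_iff (a.1 = b.1) Subtype.ext_iff.symm

def lineRel {V : Type*} (E : V → V → Prop) (e₁ e₂ : EdgeType E) : Prop :=
  e₁.1.2 = e₂.1.1

/-!
Fix an edge `e` with tail `r`. An arborescence `T` of `G` converging to `r` lifts to one of
`L(G)` converging to `e`: every edge `f ≠ e` points to the edge of `T` leaving its head, or to `e`
when its head is `r`. The lift determines `T`: an edge `(v, w)` of `T` is the successor of its
reverse `(w, v)`, unless that reverse is `e`; in that case `v` is the head of `e`, no other edge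
enters `v`, and the edge of `T` leaving `v` can only be the reverse of `e`.
-/

instance {V : Type*} [Fintype V] (E : V → V → Prop) [DecidableRel E] :
    Fintype (EdgeType E) :=
  Subtype.fintype fun p : V × V => E p.1 p.2

namespace IsArborescence

variable {V : Type*} [DecidableEq V] {E : V → V → Prop} {r : V} {T : Finset (V × V)}

theorem exists_mem_fst_eq (hT : IsArborescence E r T) {v : V} (hv : v ≠ r) :
    ∃ p ∈ T, p.1 = v := by
  obtain ⟨p, hp⟩ := Finset.card_eq_one.mp (hT.2.1 v hv)
  exact ⟨p, Finset.mem_filter.mp (hp ▸ Finset.mem_singleton_self p)⟩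

theorem fst_ne_root (hT : IsArborescence E r T) {p : V × V} (hp : p ∈ T) : p.1 ≠ r := by
  intro hpr
  have hmem : p ∈ T.filter (fun q => q.1 = r) := Finset.mem_filter.mpr ⟨hp, hpr⟩
  rw [Finset.card_eq_zero.mp hT.2.2.1] at hmem
  exact Finset.notMem_empty p hmem

theorem eq_of_fst_eq (hT : IsArborescence E r T) {p q : V × V} (hp : p ∈ T) (hq : q ∈ T)
    (hpq : p.1 = q.1) : p = q := by
  obtain ⟨a, ha⟩ := Finset.card_eq_one.mp (hT.2.1 p.1 (hT.fst_ne_root hp))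
  have hpa : p ∈ T.filter (fun x => x.1 = p.1) := Finset.mem_filter.mpr ⟨hp, rfl⟩
  have hqa : q ∈ T.filter (fun x => x.1 = p.1) := Finset.mem_filter.mpr ⟨hq, hpq.symm⟩
  rw [ha, Finset.mem_singleton] at hpa hqa
  rw [hpa, hqa]

end IsArborescence

section LineGraphLift

variable {V : Type*} {E : V → V → Prop}

open Classical in
noncomputable def lineSucc (e : EdgeType E) (T : Finset (V × V)) (f : EdgeType E) :
    EdgeType E :=
  if h : ∃ g : EdgeType E, g.1 ∈ T ∧ g.1.1 = f.1.2 then h.choose else e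

noncomputable def lineTree [Fintype V] [DecidableEq V] [DecidableRel E] (e : EdgeType E)
    (T : Finset (V × V)) : Finset (EdgeType E × EdgeType E) :=
  (Finset.univ.filter (· ≠ e)).image fun f => (f, lineSucc e T f)

theorem mem_lineTree [Fintype V] [DecidableEq V] [DecidableRel E] {e : EdgeType E}
    {T : Finset (V × V)} {p : EdgeType E × EdgeType E} :
    p ∈ lineTree e T ↔ p.1 ≠ e ∧ p.2 = lineSucc e T p.1 := by
  simp only [lineTree, Finset.mem_image, Finset.mem_filter, Finset.mem_univ, true_and]
  constructor
  · rintro ⟨f, hf, rfl⟩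
    exact ⟨hf, rfl⟩
  · rintro ⟨hp, hsucc⟩
    exact ⟨p.1, hp, by rw [← hsucc]⟩

variable [DecidableEq V] {e : EdgeType E} {T : Finset (V × V)}

theorem lineSucc_val_of_mem {r : V} (hT : IsArborescence E r T) {f : EdgeType E}
    {p : V × V} (hp : p ∈ T) (hfp : f.1.2 = p.1) : (lineSucc e T f).1 = p := by
  have hex : ∃ g : EdgeType E, g.1 ∈ T ∧ g.1.1 = f.1.2 := ⟨⟨p, hT.1 p hp⟩, hp, hfp.symm⟩
  rw [lineSucc, dif_pos hex]
  exact hT.eq_of_fst_eq hex.choose_spec.1 hp (hex.choose_spec.2.trans hfp)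

theorem lineSucc_of_head_eq_root (hT : IsArborescence E e.1.1 T) {f : EdgeType E}
    (hf : f.1.2 = e.1.1) : lineSucc e T f = e := by
  rw [lineSucc, dif_neg]
  rintro ⟨g, hg, hgf⟩
  exact hT.fst_ne_root hg (hgf.trans hf)

theorem lineSucc_mem (hT : IsArborescence E e.1.1 T) {f : EdgeType E}
    (hf : f.1.2 ≠ e.1.1) : (lineSucc e T f).1 ∈ T := by
  obtain ⟨p, hp, hpf⟩ := hT.exists_mem_fst_eq hf
  rw [lineSucc_val_of_mem hT hp hpf.symm]
  exact hp

theorem lineRel_lineSucc (hT : IsArborescence E e.1.1 T) (f : EdgeType E) :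
    lineRel E f (lineSucc e T f) := by
  by_cases hf : f.1.2 = e.1.1
  · rw [lineSucc_of_head_eq_root hT hf]
    exact hf
  · obtain ⟨p, hp, hpf⟩ := hT.exists_mem_fst_eq hf
    show f.1.2 = (lineSucc e T f).1.1
    rw [lineSucc_val_of_mem hT hp hpf.symm, hpf]

variable [Fintype V] [DecidableRel E]

theorem reflTransGen_lineTree_of_lineSucc {f : EdgeType E}
    (h : Relation.ReflTransGen (fun a b => (a, b) ∈ lineTree e T) (lineSucc e T f) e) :
    Relation.ReflTransGen (fun a b => (a, b) ∈ lineTree e T) f e := by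
  by_cases hfe : f = e
  · rw [hfe]
  · exact .head (mem_lineTree.mpr ⟨hfe, rfl⟩) h

theorem reflTransGen_lineTree (hT : IsArborescence E e.1.1 T) {v : V}
    (hv : Relation.ReflTransGen (fun a b => (a, b) ∈ T) v e.1.1) :
    ∀ f : EdgeType E, f.1.2 = v →
      Relation.ReflTransGen (fun a b => (a, b) ∈ lineTree e T) f e := by
  induction hv using Relation.ReflTransGen.head_induction_on with
  | refl =>
    intro f hf
    apply reflTransGen_lineTree_of_lineSucc
    rw [lineSucc_of_head_eq_root hT hf]
  | head hac _ ih =>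
    intro f hf
    exact reflTransGen_lineTree_of_lineSucc
      (ih _ (by rw [lineSucc_val_of_mem hT hac hf]))

theorem isArborescence_lineTree (hT : IsArborescence E e.1.1 T) :
    IsArborescence (lineRel E) e (lineTree e T) := by
  refine ⟨fun p hp => ?_, fun f hf => ?_, ?_, fun f => ?_⟩
  · rw [(mem_lineTree.mp hp).2]
    exact lineRel_lineSucc hT p.1
  · have hout : (lineTree e T).filter (fun p => p.1 = f) = {(f, lineSucc e T f)} := by
      ext ⟨g, h⟩
      simp only [Finset.mem_filter, mem_lineTree, Finset.mem_singleton, Prod.mk.injEq]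
      constructor
      · rintro ⟨⟨-, rfl⟩, rfl⟩
        exact ⟨rfl, rfl⟩
      · rintro ⟨rfl, rfl⟩
        exact ⟨⟨hf, rfl⟩, rfl⟩
    rw [hout, Finset.card_singleton]
  · exact Finset.card_eq_zero.mpr <| Finset.filter_eq_empty_iff.mpr fun p hp =>
      (mem_lineTree.mp hp).1
  · exact reflTransGen_lineTree hT (hT.2.2.2 f.1.2) f rfl

theorem subset_of_lineTree_eq (hsymm : ∀ u v, E u v → E v u)
    {T₁ T₂ : Finset (V × V)} (h₁ : IsArborescence E e.1.1 T₁)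
    (h₂ : IsArborescence E e.1.1 T₂) (hlift : lineTree e T₁ = lineTree e T₂) :
    T₁ ⊆ T₂ := by
  intro p hp
  have hpr : p.1 ≠ e.1.1 := h₁.fst_ne_root hp
  by_cases hin : ∃ f : EdgeType E, f ≠ e ∧ f.1.2 = p.1
  · obtain ⟨f, hfe, hfp⟩ := hin
    have hsucc : lineSucc e T₁ f = lineSucc e T₂ f := by
      have hmem : (f, lineSucc e T₁ f) ∈ lineTree e T₂ := hlift ▸ mem_lineTree.mpr ⟨hfe, rfl⟩
      exact (mem_lineTree.mp hmem).2
    rw [← lineSucc_val_of_mem h₁ hp hfp, hsucc]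
    exact lineSucc_mem h₂ (hfp ▸ hpr)
  · push Not at hin
    have reverse_eq_e : ∀ q ∈ T₂, q.1 = p.1 → q.2 = e.1.1 := fun q hq hqp => by
      have hrev : (⟨(q.2, q.1), hsymm _ _ (h₂.1 q hq)⟩ : EdgeType E) = e :=
        by_contra fun hne => hin _ hne hqp
      rw [← hrev]
    obtain ⟨q, hq, hqp⟩ := h₂.exists_mem_fst_eq hpr
    have hp₂ : p.2 = e.1.1 := by
      have hrev : (⟨(p.2, p.1), hsymm _ _ (h₁.1 p hp)⟩ : EdgeType E) = e :=
        by_contra fun hne => hin _ hne rfl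
      rw [← hrev]
    rwa [Prod.ext hqp.symm (hp₂.trans (reverse_eq_e q hq hqp).symm)]

end LineGraphLift

theorem kappa_line_graph_ge_general {V : Type*} [Fintype V] [DecidableEq V]
    (E : V → V → Prop) [DecidableRel E]
    (hsymm : ∀ u v, E u v → E v u)
    (e : EdgeType E) :
    kappa V E e.1.1 ≤ kappa (EdgeType E) (lineRel E) e := by
  refine Nat.card_le_card_of_injective
    (fun T => ⟨lineTree e T.1, isArborescence_lineTree T.2⟩) fun ⟨T₁, h₁⟩ ⟨T₂, h₂⟩ hlift => ?_
  have hlift : lineTree e T₁ = lineTree e T₂ := congrArg Subtype.val hlift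
  exact Subtype.ext <| (subset_of_lineTree_eq hsymm h₁ h₂ hlift).antisymm
    (subset_of_lineTree_eq hsymm h₂ h₁ hlift.symm)

/-- For a finite symmetric directed graph with all in-degrees at least one, the number
of oriented spanning trees of the directed line graph rooted at an edge `e` is at least
the number of oriented spanning trees of the graph rooted at the tail of `e`. -/
theorem kappa_line_graph_ge {V : Type*} [Fintype V] [DecidableEq V]
    (E : V → V → Prop) [DecidableRel E]
    (hsymm : ∀ u v, E u v → E v u)
    (hin : ∀ v : V, ∃ u : V, E u v)
    (e : EdgeType E) :
    kappa V E e.1.1 ≤ kappa (EdgeType E) (lineRel E) e :=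
  kappa_line_graph_ge_general E hsymm e
end

section
/- Let G be a finite symmetric directed graph with every vertex of in-degree at least 1. Then G has an oriented spanning tree if and only if its directed line graph L(G) has an oriented spanning tree. -/
def hasOrientedSpanningTree {V : Type*} (E : V → V → Prop) : Prop :=
  ∃ r : V, ∀ v : V, Relation.ReflTransGen E v r

/-!
A walk `v₀ → v₁ → ⋯ → vₙ` in `G` lifts to the walk of its consecutive edges in `L(G)`, and a
walk of edges in `L(G)` projects to the walk of their heads in `G`. So an edge into every vertex
lets a root edge of `L(G)` project to a root of `G`, and an edge `r → u` out of a root `r` of `G`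
(available by symmetry) is a root of `L(G)`.
-/

open Relation

section LineGraph

variable {V : Type*} (E : V → V → Prop)

theorem reflTransGen_of_reflTransGen_lineRel {e₁ e₂ : EdgeType E}
    (h : ReflTransGen (lineRel E) e₁ e₂) : ReflTransGen E e₁.1.2 e₂.1.2 := by
  induction h with
  | refl => exact .refl
  | @tail b c _ hbc ih => exact ih.tail (hbc ▸ c.2)

theorem reflTransGen_lineRel_of_reflTransGen {e t : EdgeType E}
    (h : ReflTransGen E e.1.2 t.1.1) : ReflTransGen (lineRel E) e t := by
  obtain ⟨⟨x, y⟩, hxy⟩ := t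
  change ReflTransGen E e.1.2 x at h
  induction h generalizing y with
  | refl => exact .single rfl
  | @tail b c _ hbc ih => exact (ih c hbc).tail rfl

theorem hasOrientedSpanningTree_lineRel (hout : ∀ v, ∃ w, E v w)
    (h : hasOrientedSpanningTree E) : hasOrientedSpanningTree (lineRel E) := by
  obtain ⟨r, hr⟩ := h
  obtain ⟨u, hru⟩ := hout r
  exact ⟨⟨(r, u), hru⟩, fun e => reflTransGen_lineRel_of_reflTransGen E (hr e.1.2)⟩

theorem hasOrientedSpanningTree_of_lineRel (hin : ∀ v, ∃ u, E u v)
    (h : hasOrientedSpanningTree (lineRel E)) : hasOrientedSpanningTree E := by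
  obtain ⟨t, ht⟩ := h
  refine ⟨t.1.2, fun v => ?_⟩
  obtain ⟨u, huv⟩ := hin v
  exact reflTransGen_of_reflTransGen_lineRel E (ht ⟨(u, v), huv⟩)

end LineGraph

theorem ost_iff_line_graph_ost_general {V : Type*} (E : V → V → Prop)
    (hsymm : ∀ u v, E u v → E v u)
    (hin : ∀ v : V, ∃ u : V, E u v) :
    hasOrientedSpanningTree E ↔ hasOrientedSpanningTree (lineRel E) :=
  have hout : ∀ v, ∃ w, E v w := fun v => (hin v).imp fun u huv => hsymm u v huv
  ⟨hasOrientedSpanningTree_lineRel E hout, hasOrientedSpanningTree_of_lineRel E hin⟩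

/-- For a finite symmetric directed graph in which every vertex has in-degree at least one,
the graph has an oriented spanning tree iff its directed line graph does. -/
theorem ost_iff_line_graph_ost {V : Type*} [Fintype V] (E : V → V → Prop)
    (hsymm : ∀ u v, E u v → E v u)
    (hin : ∀ v : V, ∃ u : V, E u v) :
    hasOrientedSpanningTree E ↔ hasOrientedSpanningTree (lineRel E) :=
  ost_iff_line_graph_ost_general E hsymm hin
end

section
/- Let G be a finite symmetric directed graph that has an oriented spanning tree with root vertex r. Then for every neighbor v of r in G, the directed line graph L(G) has an oriented spanning tree rooted at the vertex corresponding to the edge (r, v). -/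
theorem reflTransGen_lineRel_of_reflTransGen_s3 {V : Type*} {E : V → V → Prop}
    {e f : EdgeType E} (h : Relation.ReflTransGen E e.1.2 f.1.1) :
    Relation.ReflTransGen (lineRel E) e f := by
  obtain ⟨⟨a, b⟩, hab⟩ := e
  change Relation.ReflTransGen E b f.1.1 at h
  induction h using Relation.ReflTransGen.head_induction_on generalizing a with
  | refl => exact .single rfl
  | head hbc _ ih => exact .head (show lineRel E ⟨(a, _), hab⟩ ⟨(_, _), hbc⟩ from rfl) (ih _ hbc)

theorem line_graph_ost_rooted_at_root_edge_general {V : Type*} (E : V → V → Prop)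
    (r : V) (hroot : ∀ u : V, Relation.ReflTransGen E u r)
    (v : V) (hv : E r v) :
    ∀ e : EdgeType E, Relation.ReflTransGen (lineRel E) e ⟨(r, v), hv⟩ :=
  fun e => reflTransGen_lineRel_of_reflTransGen_s3 (hroot e.1.2)

/-- If a finite symmetric directed graph has an oriented spanning tree with root `r`,
then for every neighbor `v` of `r`, the directed line graph has an oriented spanning
tree rooted at the vertex corresponding to the edge `(r, v)`. -/
theorem line_graph_ost_rooted_at_root_edge {V : Type*} [Fintype V] (E : V → V → Prop)
    (hsymm : ∀ u v, E u v → E v u)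
    (r : V) (hroot : ∀ u : V, Relation.ReflTransGen E u r)
    (v : V) (hv : E r v) :
    ∀ e : EdgeType E, Relation.ReflTransGen (lineRel E) e ⟨(r, v), hv⟩ :=
  line_graph_ost_rooted_at_root_edge_general E r hroot v hv
end

section
/- Let L be the Laplacian matrix of a finite directed weighted graph G with nonnegative weights. Then G has an oriented spanning tree if and only if L has a simple zero eigenvalue with right eigenvector the all-ones vector, and in that case every other eigenvalue of L has strictly positive real part. -/
/-!
If every vertex reaches a root `r`, the maximum principle makes every null vector of `L` constant,
and `L (L v) = 0` forces `L v = 0`, because a constant `L v` is nonnegative at a maximum of `v` and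
nonpositive at a minimum; so the generalized null space of `L` is spanned by `1`. If there is no
such root, two vertices without a common descendant have disjoint out-closed descendant sets, each
supporting a left null vector of `L`, so zero has multiplicity at least two. The real parts are
positive by Gershgorin: the disc of row `i` is centred at the out-degree `d` with radius `d`.
-/

open Matrix Polynomial

theorem Relation.exists_forall_reflTransGen_of_join {α : Type*} [Fintype α] [Nonempty α]
    {r : α → α → Prop} (h : ∀ u w, Relation.Join (Relation.ReflTransGen r) u w) :
    ∃ t, ∀ v, Relation.ReflTransGen r v t := by
  classical
  suffices ∀ s : Finset α, ∃ t, ∀ v ∈ s, Relation.ReflTransGen r v t by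
    simpa using this Finset.univ
  intro s
  induction s using Finset.induction_on with
  | empty => exact ⟨Classical.arbitrary α, by simp⟩
  | insert u s _ ih =>
    obtain ⟨t, ht⟩ := ih
    obtain ⟨t', hut', htt'⟩ := h u t
    refine ⟨t', fun v hv => ?_⟩
    rcases Finset.mem_insert.mp hv with rfl | hv
    · exact hut'
    · exact (ht v hv).trans htt'

theorem Complex.re_pos_of_norm_sub_ofReal_le {μ : ℂ} {d : ℝ} (h : ‖μ - d‖ ≤ d) (hμ : μ ≠ 0) :
    0 < μ.re := by
  have hd : 0 ≤ d := (norm_nonneg _).trans h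
  have hsq : (μ.re - d) ^ 2 + μ.im ^ 2 ≤ d ^ 2 := by
    have := pow_le_pow_left₀ (norm_nonneg _) h 2
    rwa [Complex.sq_norm, Complex.normSq_apply, Complex.sub_re, Complex.sub_im,
      Complex.ofReal_re, Complex.ofReal_im, sub_zero, ← sq, ← sq] at this
  have hpos : 0 < μ.re ^ 2 + μ.im ^ 2 := by
    simpa [Complex.normSq_apply, sq] using Complex.normSq_pos.mpr hμ
  nlinarith

theorem Matrix.rootMultiplicity_zero_charpoly_eq_finrank {K ι : Type*} [Field K] [Fintype ι]
    [DecidableEq ι] (M : Matrix ι ι K) :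
    M.charpoly.rootMultiplicity 0 =
      Module.finrank K (Module.End.maxGenEigenspace (toLin' M) 0) := by
  rw [LinearMap.finrank_maxGenEigenspace_zero_eq, Matrix.charpoly_toLin',
    rootMultiplicity_eq_natTrailingDegree']

theorem linearIndependent_pair_of_disjoint_support {K ι : Type*} [Field K] {v w : ι → K}
    (hv : v ≠ 0) (hw : w ≠ 0) (h : Disjoint (Function.support v) (Function.support w)) :
    LinearIndependent K ![v, w] := by
  rw [LinearIndependent.pair_iff]
  intro s t hst
  obtain ⟨i, hi⟩ := Function.ne_iff.mp hv
  obtain ⟨j, hj⟩ := Function.ne_iff.mp hw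
  have hwi : w i = 0 := Function.notMem_support.mp (h.notMem_of_mem_left hi)
  have hvj : v j = 0 := Function.notMem_support.mp (h.notMem_of_mem_right hj)
  have hsi := congrFun hst i
  have htj := congrFun hst j
  simp only [Pi.add_apply, Pi.smul_apply, smul_eq_mul, Pi.zero_apply, hwi, hvj, mul_zero,
    add_zero, zero_add] at hsi htj
  exact ⟨(mul_eq_zero.mp hsi).resolve_right hi, (mul_eq_zero.mp htj).resolve_right hj⟩

namespace Matrix

variable {ι : Type*} [Fintype ι] [DecidableEq ι]

def laplacian (a : ι → ι → ℝ) : Matrix ι ι ℝ :=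
  of fun i j => if j = i then ∑ k, a i k else -a i j

variable {a : ι → ι → ℝ}

theorem laplacian_mulVec_apply (hdiag : ∀ i, a i i = 0) (v : ι → ℝ) (i : ι) :
    (laplacian a *ᵥ v) i = ∑ j, a i j * (v i - v j) := by
  have hrow : ∀ j, laplacian a i j = (if j = i then ∑ k, a i k else 0) - a i j := by
    intro j
    by_cases h : j = i
    · simp [laplacian, h, hdiag]
    · simp [laplacian, h]
  simp only [mulVec, dotProduct, hrow, sub_mul, ite_mul, zero_mul, Finset.sum_sub_distrib,
    Finset.sum_ite_eq', Finset.mem_univ, if_true, mul_sub, Finset.sum_mul]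

theorem laplacian_mulVec_one (hdiag : ∀ i, a i i = 0) : laplacian a *ᵥ 1 = 0 := by
  ext i
  simp [laplacian_mulVec_apply hdiag]

theorem laplacian_apply_eq_zero (ha : ∀ i j, 0 ≤ a i j) {i j : ι} (hij : j ≠ i)
    (h : ¬ 0 < a i j) : laplacian a i j = 0 := by
  simp [laplacian, hij, le_antisymm (not_lt.mp h) (ha i j)]

theorem laplacian_mulVec_apply_nonneg_of_isMax (ha : ∀ i j, 0 ≤ a i j)
    (hdiag : ∀ i, a i i = 0) {v : ι → ℝ} {i : ι} (hmax : ∀ j, v j ≤ v i) :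
    0 ≤ (laplacian a *ᵥ v) i := by
  rw [laplacian_mulVec_apply hdiag]
  exact Finset.sum_nonneg fun j _ => mul_nonneg (ha i j) (sub_nonneg.mpr (hmax j))

theorem apply_eq_of_reflTransGen_of_isMax (ha : ∀ i j, 0 ≤ a i j) (hdiag : ∀ i, a i i = 0)
    {v : ι → ℝ} (hv : laplacian a *ᵥ v = 0) {i j : ι} (hmax : ∀ k, v k ≤ v i)
    (hij : Relation.ReflTransGen (fun i j => 0 < a i j) i j) : v j = v i := by
  induction hij with
  | refl => rfl
  | @tail b c _ hbc ih =>
    have hterms : ∀ k ∈ Finset.univ, 0 ≤ a b k * (v b - v k) := fun k _ =>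
      mul_nonneg (ha b k) (by rw [ih]; linarith [hmax k])
    have hrow : ∑ k, a b k * (v b - v k) = 0 := by
      rw [← laplacian_mulVec_apply hdiag, hv, Pi.zero_apply]
    have hc := (Finset.sum_eq_zero_iff_of_nonneg hterms).mp hrow c (Finset.mem_univ c)
    rw [← ih]
    linarith [(mul_eq_zero.mp hc).resolve_left hbc.ne']

theorem eq_const_of_laplacian_mulVec_eq_zero (ha : ∀ i j, 0 ≤ a i j) (hdiag : ∀ i, a i i = 0)
    {r : ι} (hr : ∀ v, Relation.ReflTransGen (fun i j => 0 < a i j) v r)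
    {v : ι → ℝ} (hv : laplacian a *ᵥ v = 0) : v = fun _ => v r := by
  have : Nonempty ι := ⟨r⟩
  obtain ⟨imax, himax⟩ := Finite.exists_max v
  obtain ⟨imin, himin⟩ := Finite.exists_min v
  have hvmax := apply_eq_of_reflTransGen_of_isMax ha hdiag hv himax (hr imax)
  have hvmin := apply_eq_of_reflTransGen_of_isMax (v := -v) ha hdiag
    (by rw [mulVec_neg, hv, neg_zero]) (fun k => neg_le_neg (himin k)) (hr imin)
  ext i
  simp only [Pi.neg_apply, neg_inj] at hvmin
  linarith [himax i, himin i]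

theorem eq_zero_of_laplacian_mulVec_eq_const [Nonempty ι] (ha : ∀ i j, 0 ≤ a i j)
    (hdiag : ∀ i, a i i = 0) {v : ι → ℝ} {c : ℝ} (hv : laplacian a *ᵥ v = fun _ => c) :
    c = 0 := by
  obtain ⟨imax, himax⟩ := Finite.exists_max v
  obtain ⟨imin, himin⟩ := Finite.exists_min v
  have hc_nonneg : 0 ≤ c :=
    congrFun hv imax ▸ laplacian_mulVec_apply_nonneg_of_isMax ha hdiag himax
  have hc_nonpos : 0 ≤ -c := by
    have := laplacian_mulVec_apply_nonneg_of_isMax (v := -v) (i := imin) ha hdiag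
      (fun k => neg_le_neg (himin k))
    rwa [mulVec_neg, Pi.neg_apply, hv] at this
  linarith

theorem laplacian_mulVec_eq_zero_of_pow_mulVec_eq_zero (ha : ∀ i j, 0 ≤ a i j)
    (hdiag : ∀ i, a i i = 0) {r : ι} (hr : ∀ v, Relation.ReflTransGen (fun i j => 0 < a i j) v r)
    (k : ℕ) {v : ι → ℝ} (hv : (laplacian a ^ k) *ᵥ v = 0) : laplacian a *ᵥ v = 0 := by
  have : Nonempty ι := ⟨r⟩
  induction k generalizing v with
  | zero => rw [pow_zero, one_mulVec] at hv; rw [hv, mulVec_zero]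
  | succ k ih =>
    have hLv : laplacian a *ᵥ (laplacian a *ᵥ v) = 0 :=
      ih (by rwa [mulVec_mulVec, ← pow_succ])
    have hconst := eq_const_of_laplacian_mulVec_eq_zero ha hdiag hr hLv
    rw [hconst, eq_zero_of_laplacian_mulVec_eq_const ha hdiag hconst]
    rfl

theorem maxGenEigenspace_toLin'_laplacian_zero (ha : ∀ i j, 0 ≤ a i j) (hdiag : ∀ i, a i i = 0)
    {r : ι} (hr : ∀ v, Relation.ReflTransGen (fun i j => 0 < a i j) v r) :
    Module.End.maxGenEigenspace (toLin' (laplacian a)) 0 = Submodule.span ℝ {1} := by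
  apply le_antisymm
  · intro v hv
    obtain ⟨k, hk⟩ := (Module.End.mem_maxGenEigenspace _ _ _).mp hv
    rw [zero_smul, sub_zero, ← toLin'_pow, toLin'_apply] at hk
    have hconst := eq_const_of_laplacian_mulVec_eq_zero ha hdiag hr
      (laplacian_mulVec_eq_zero_of_pow_mulVec_eq_zero ha hdiag hr k hk)
    rw [hconst, Submodule.mem_span_singleton]
    exact ⟨v r, by ext; simp⟩
  · rw [Submodule.span_le, Set.singleton_subset_iff, SetLike.mem_coe]
    apply Module.End.eigenspace_le_maxGenEigenspace
    rw [Module.End.mem_eigenspace_iff, toLin'_apply, laplacian_mulVec_one hdiag, zero_smul]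

theorem rootMultiplicity_zero_charpoly_laplacian (ha : ∀ i j, 0 ≤ a i j)
    (hdiag : ∀ i, a i i = 0) {r : ι}
    (hr : ∀ v, Relation.ReflTransGen (fun i j => 0 < a i j) v r) :
    (laplacian a).charpoly.rootMultiplicity 0 = 1 := by
  rw [rootMultiplicity_zero_charpoly_eq_finrank,
    maxGenEigenspace_toLin'_laplacian_zero ha hdiag hr]
  exact finrank_span_singleton (Function.ne_iff.mpr ⟨r, one_ne_zero⟩)

/-- The principal submatrix on an out-closed set still has zero row sums, hence is singular. -/
theorem exists_vecMul_laplacian_eq_zero_of_closed (ha : ∀ i j, 0 ≤ a i j)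
    (hdiag : ∀ i, a i i = 0) {S : Set ι} (hS : ∀ i j, i ∈ S → 0 < a i j → j ∈ S)
    (hne : S.Nonempty) :
    ∃ w : ι → ℝ, w ≠ 0 ∧ w ᵥ* laplacian a = 0 ∧ Function.support w ⊆ S := by
  classical
  have hout : ∀ i j, i ∈ S → j ∉ S → laplacian a i j = 0 := fun i j hi hj =>
    laplacian_apply_eq_zero ha (fun h => hj (h ▸ hi)) (fun h => hj (hS i j hi h))
  set B : Matrix S S ℝ := (laplacian a).submatrix (↑) (↑)
  have hB : B *ᵥ 1 = 0 := by
    ext i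
    have hrow := congrFun (laplacian_mulVec_one (a := a) hdiag) i
    have houtside : ∑ j : {j // j ∉ S}, laplacian a i j * (1 : ι → ℝ) j = 0 :=
      Finset.sum_eq_zero fun j _ => by rw [hout i j i.2 j.2, zero_mul]
    rw [mulVec, dotProduct, ← Fintype.sum_subtype_add_sum_subtype (· ∈ S), houtside,
      add_zero] at hrow
    exact hrow
  have : Nonempty S := hne.to_subtype
  obtain ⟨w, hw0, hw⟩ := exists_vecMul_eq_zero_iff.mpr
    (exists_mulVec_eq_zero_iff.mp ⟨1, one_ne_zero, hB⟩)
  set w' : ι → ℝ := fun i => if h : i ∈ S then w ⟨i, h⟩ else 0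
  have hsum : ∀ j, (w' ᵥ* laplacian a) j = ∑ i : S, w i * laplacian a i j := by
    intro j
    have houtside : ∑ i : {i // i ∉ S}, w' i * laplacian a i j = 0 :=
      Finset.sum_eq_zero fun i _ => by simp [w', i.2]
    rw [vecMul, dotProduct, ← Fintype.sum_subtype_add_sum_subtype (· ∈ S), houtside, add_zero]
    exact Finset.sum_congr rfl fun i _ => by simp [w', i.2]
  refine ⟨w', ?_, ?_, ?_⟩
  · obtain ⟨i, hi⟩ := Function.ne_iff.mp hw0
    exact Function.ne_iff.mpr ⟨i, by simpa [w', i.2] using hi⟩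
  · ext j
    rw [hsum, Pi.zero_apply]
    by_cases hj : j ∈ S
    · exact congrFun hw ⟨j, hj⟩
    · exact Finset.sum_eq_zero fun i _ => by rw [hout i j i.2 hj, mul_zero]
  · intro i hi
    by_contra h
    exact hi (dif_neg h)

theorem two_le_rootMultiplicity_zero_charpoly_laplacian [Nonempty ι] (ha : ∀ i j, 0 ≤ a i j)
    (hdiag : ∀ i, a i i = 0)
    (hno : ¬ ∃ r, ∀ v, Relation.ReflTransGen (fun i j => 0 < a i j) v r) :
    2 ≤ (laplacian a).charpoly.rootMultiplicity 0 := by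
  obtain ⟨u, w, huw⟩ :
      ∃ u w, ¬ Relation.Join (Relation.ReflTransGen (fun i j => 0 < a i j)) u w := by
    by_contra! h
    exact hno (Relation.exists_forall_reflTransGen_of_join h)
  have hclosed : ∀ x i j, i ∈ {y | Relation.ReflTransGen (fun i j => 0 < a i j) x y} →
      0 < a i j → j ∈ {y | Relation.ReflTransGen (fun i j => 0 < a i j) x y} :=
    fun _ _ _ hi hij => Relation.ReflTransGen.tail hi hij
  obtain ⟨vu, hvu0, hvu, hsu⟩ :=
    exists_vecMul_laplacian_eq_zero_of_closed ha hdiag (hclosed u) ⟨u, .refl⟩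
  obtain ⟨vw, hvw0, hvw, hsw⟩ :=
    exists_vecMul_laplacian_eq_zero_of_closed ha hdiag (hclosed w) ⟨w, .refl⟩
  have hind : LinearIndependent ℝ ![vu, vw] :=
    linearIndependent_pair_of_disjoint_support hvu0 hvw0 <|
      Set.disjoint_left.mpr fun i hiu hiw => huw ⟨i, hsu hiu, hsw hiw⟩
  have hspan : Submodule.span ℝ (Set.range ![vu, vw]) ≤
      Module.End.maxGenEigenspace (toLin' (laplacian a)ᵀ) 0 := by
    rw [Submodule.span_le]
    rintro _ ⟨i, rfl⟩
    apply Module.End.eigenspace_le_maxGenEigenspace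
    rw [Module.End.mem_eigenspace_iff, toLin'_apply, mulVec_transpose, zero_smul]
    fin_cases i
    exacts [hvu, hvw]
  rw [← charpoly_transpose, rootMultiplicity_zero_charpoly_eq_finrank]
  calc 2 = Module.finrank ℝ (Submodule.span ℝ (Set.range ![vu, vw])) := by
        rw [finrank_span_eq_card hind, Fintype.card_fin]
    _ ≤ _ := Submodule.finrank_mono hspan

theorem re_pos_of_mem_roots_charpoly_laplacian (ha : ∀ i j, 0 ≤ a i j) (hdiag : ∀ i, a i i = 0)
    {μ : ℂ} (hμ : μ ∈ ((laplacian a).map Complex.ofReal).charpoly.roots) (h0 : μ ≠ 0) :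
    0 < μ.re := by
  have heig : Module.End.HasEigenvalue (toLin' ((laplacian a).map Complex.ofReal)) μ := by
    rw [Module.End.hasEigenvalue_iff_isRoot_charpoly, charpoly_toLin']
    exact (mem_roots'.mp hμ).2
  obtain ⟨k, hk⟩ := eigenvalue_mem_ball heig
  have hcentre : (laplacian a).map Complex.ofReal k k = ↑(∑ j, a k j) := by simp [laplacian]
  have hradius : ∑ j ∈ Finset.univ.erase k, ‖(laplacian a).map Complex.ofReal k j‖ =
      ∑ j, a k j := by
    rw [← Finset.sum_erase Finset.univ (hdiag k)]
    refine Finset.sum_congr rfl fun j hj => ?_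
    simp [laplacian, Finset.ne_of_mem_erase hj, abs_of_nonneg (ha k j)]
  rw [mem_closedBall_iff_norm, hcentre, hradius] at hk
  exact Complex.re_pos_of_norm_sub_ofReal_le hk h0

end Matrix

/-- A finite directed weighted graph (nonnegative weights `a`, edges = pairs of positive
weight) has an oriented spanning tree iff its Laplacian has a simple zero eigenvalue
with right eigenvector the all-ones vector; and in that case every other eigenvalue of
the Laplacian has strictly positive real part. -/
theorem laplacian_zero_simple_iff_ost (n : ℕ) [NeZero n]
    (a : Fin n → Fin n → ℝ) (ha : ∀ i j, 0 ≤ a i j) (hdiag : ∀ i, a i i = 0)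
    (L : Matrix (Fin n) (Fin n) ℝ)
    (hL : ∀ i j, L i j = if j = i then ∑ k, a i k else -a i j) :
    ((∃ r : Fin n, ∀ v : Fin n, Relation.ReflTransGen (fun i j => 0 < a i j) v r) ↔
      (L.charpoly.rootMultiplicity 0 = 1 ∧ L.mulVec (fun _ => 1) = 0)) ∧
    ((∃ r : Fin n, ∀ v : Fin n, Relation.ReflTransGen (fun i j => 0 < a i j) v r) →
      ∀ μ ∈ ((L.map (Complex.ofReal)).charpoly).roots, μ ≠ 0 → 0 < μ.re) := by
  obtain rfl : L = laplacian a := Matrix.ext hL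
  refine ⟨⟨fun ⟨r, hr⟩ => ?_, fun ⟨hsimple, _⟩ => ?_⟩, fun _ μ hμ h0 => ?_⟩
  · exact ⟨rootMultiplicity_zero_charpoly_laplacian ha hdiag hr, laplacian_mulVec_one hdiag⟩
  · by_contra hno
    have := two_le_rootMultiplicity_zero_charpoly_laplacian ha hdiag hno
    omega
  · exact re_pos_of_mem_roots_charpoly_laplacian ha hdiag hμ h0
end
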